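/- For every real number k and every complex number z with Im z > 0, Σ_{r=−3}^{3} P_k(z + r/7) = (7 + 7^{1−k}) · P_k(7z) − 7^{1−k} · P_k(49z). -/

import Mathlib

/-- P_k(z) = Σ_{n=1}^∞ n^{−k} · e^{2πinz}/(1 − e^{2πinz}), for real k and Im z > 0. -/
noncomputable def P (k : ℝ) (z : ℂ) : ℂ :=
  ∑' n : ℕ+, (n : ℂ) ^ (-(k : ℂ)) *
    (Complex.exp (2 * Real.pi * Complex.I * n * z) /
      (1 - Complex.exp (2 * Real.pi * Complex.I * n * z)))

/-!
With `q = e^{2πiz}`, `P k z` is the Lambert series `∑ n^{-k} qⁿ / (1 - qⁿ)`, and `z ↦ z + j / p`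
multiplies `q` by `ζ ^ j` for a primitive `p`-th root of unity `ζ`. For fixed `n`, the sum over `j`
of `ζ^{nj} qⁿ / (1 - ζ^{nj} qⁿ)` is `p qⁿ / (1 - qⁿ)` if `p ∣ n` and `p q^{pn} / (1 - q^{pn})`
otherwise, because only the multiples of `p` survive in the geometric expansion. Splitting the sum
over `n` according to `p ∣ n` and writing `n = p m` gives the formula for every prime `p`; the
window `-3, …, 3` becomes `0, …, 6` by the `1`-periodicity of `P`.
-/

open Finset

namespace IsPrimitiveRoot

variable {K : Type*} [Field K] {ζ w : K} {N : ℕ}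

lemma sum_pow_pow_eq_zero (hζ : IsPrimitiveRoot ζ N) {m : ℕ} (hm0 : m ≠ 0) (hmN : m < N) :
    ∑ j ∈ range N, (ζ ^ m) ^ j = 0 := by
  rw [geom_sum_eq (hζ.pow_ne_one_of_pos_of_lt hm0 hmN), ← pow_mul, mul_comm, pow_mul, hζ.pow_eq_one,
    one_pow, sub_self, zero_div]

lemma pow_pow_mul_pow (hζ : IsPrimitiveRoot ζ N) (j : ℕ) : (ζ ^ j * w) ^ N = w ^ N := by
  rw [mul_pow, ← pow_mul, mul_comm j, pow_mul, hζ.pow_eq_one, one_pow, one_mul]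

lemma one_sub_pow_mul_ne_zero (hζ : IsPrimitiveRoot ζ N) (hw : w ^ N ≠ 1) (j : ℕ) :
    1 - ζ ^ j * w ≠ 0 := by
  rw [sub_ne_zero]
  rintro h
  exact hw (by rw [← hζ.pow_pow_mul_pow j, ← h, one_pow])

/-- `(1 - x)⁻¹ = (∑_{m < N} xᵐ) / (1 - w ^ N)` for `x = ζ ^ j * w`, and summing over `j` kills every
`m ≠ 0`. -/
lemma sum_inv_one_sub_pow_mul (hζ : IsPrimitiveRoot ζ N) (hw : w ^ N ≠ 1) :
    ∑ j ∈ range N, (1 - ζ ^ j * w)⁻¹ = N * (1 - w ^ N)⁻¹ := by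
  have geom (j : ℕ) :
      (1 - ζ ^ j * w)⁻¹ = (∑ m ∈ range N, w ^ m * (ζ ^ m) ^ j) * (1 - w ^ N)⁻¹ := by
    rw [eq_mul_inv_iff_mul_eq₀ (sub_ne_zero.mpr hw.symm), ← hζ.pow_pow_mul_pow j,
      ← mul_neg_geom_sum, ← mul_assoc, inv_mul_cancel₀ (hζ.one_sub_pow_mul_ne_zero hw j), one_mul]
    exact sum_congr rfl fun m _ => by ring
  rw [sum_congr rfl fun j _ => geom j, ← sum_mul, sum_comm]
  congr 1
  simp_rw [← mul_sum]
  rw [sum_eq_single 0 (fun m hm hm0 => ?_) (fun h => by simp_all)]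
  · simp
  · rw [hζ.sum_pow_pow_eq_zero hm0 (mem_range.mp hm), mul_zero]

lemma sum_pow_mul_div_one_sub_pow_mul (hζ : IsPrimitiveRoot ζ N) (hw : w ^ N ≠ 1) :
    ∑ j ∈ range N, ζ ^ j * w / (1 - ζ ^ j * w) = N * (w ^ N / (1 - w ^ N)) := by
  have hwN : 1 - w ^ N ≠ 0 := sub_ne_zero.mpr hw.symm
  have h (j : ℕ) : ζ ^ j * w / (1 - ζ ^ j * w) = (1 - ζ ^ j * w)⁻¹ - 1 := by
    field_simp [hζ.one_sub_pow_mul_ne_zero hw j]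
    ring
  rw [sum_congr rfl fun j _ => h j, sum_sub_distrib, hζ.sum_inv_one_sub_pow_mul hw, sum_const,
    card_range, nsmul_one]
  field_simp
  ring

end IsPrimitiveRoot

open Complex
open scoped Real

noncomputable def lambertTerm (k : ℝ) (q : ℂ) (n : ℕ+) : ℂ :=
  (n : ℂ) ^ (-(k : ℂ)) * (q ^ (n : ℕ) / (1 - q ^ (n : ℕ)))

noncomputable def lambertSeries (k : ℝ) (q : ℂ) : ℂ :=
  ∑' n, lambertTerm k q n

lemma norm_pow_lt_one {q : ℂ} (hq : ‖q‖ < 1) {m : ℕ} (hm : m ≠ 0) : ‖q ^ m‖ < 1 := by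
  rw [norm_pow]
  exact pow_lt_one₀ (norm_nonneg q) hq hm

lemma summable_lambertTerm (k : ℝ) {q : ℂ} (hq : ‖q‖ < 1) : Summable (lambertTerm k q) := by
  have hK : Summable fun n : ℕ+ => ‖((n : ℕ) : ℂ) ^ ⌈-k⌉₊ * q ^ (n : ℕ) / (1 - q ^ (n : ℕ))‖ :=
    (summable_norm_iff.mpr (summable_norm_pow_mul_geometric_div_one_sub (𝕜 := ℂ) ⌈-k⌉₊ hq)
      ).comp_injective PNat.coe_injective
  refine .of_norm_bounded hK fun n => ?_
  have hn : (1 : ℝ) ≤ (n : ℕ) := Nat.one_le_cast.mpr n.pos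
  have hpow : ‖(n : ℂ) ^ (-(k : ℂ))‖ ≤ ‖((n : ℕ) : ℂ) ^ ⌈-k⌉₊‖ := by
    rw [norm_natCast_cpow_of_pos n.pos, norm_pow, norm_natCast, ← Real.rpow_natCast]
    exact Real.rpow_le_rpow_of_exponent_le hn (by simpa using Nat.le_ceil (-k))
  rw [lambertTerm, norm_mul, mul_div_assoc, norm_mul]
  exact mul_le_mul_of_nonneg_right hpow (norm_nonneg _)

lemma lambertTerm_mul (k : ℝ) (q : ℂ) (d m : ℕ+) :
    lambertTerm k q (d * m) = (d : ℂ) ^ (-(k : ℂ)) * lambertTerm k (q ^ (d : ℕ)) m := by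
  simp only [lambertTerm, PNat.mul_coe, Nat.cast_mul, natCast_mul_natCast_cpow, pow_mul]
  ring

lemma tsum_ite_dvd {α : Type*} [AddCommMonoid α] [TopologicalSpace α] (d : ℕ+) (g : ℕ+ → α) :
    ∑' n : ℕ+, (if (d : ℕ) ∣ n then g n else 0) = ∑' m, g (d * m) := by
  rw [← (mul_right_injective d).tsum_eq]
  · exact tsum_congr fun m => if_pos (by simp)
  · intro n hn
    obtain ⟨m, hm⟩ : (d : ℕ) ∣ n := by
      by_contra h
      exact hn (if_neg h)
    exact ⟨⟨m, Nat.pos_of_mul_pos_left (hm ▸ n.pos)⟩, PNat.eq hm.symm⟩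

section

variable {p : ℕ+} {ζ q : ℂ}

lemma sum_lambertTerm_pow_mul (k : ℝ) (hp : p.Prime) (hζ : IsPrimitiveRoot ζ p) (hq : ‖q‖ < 1)
    (n : ℕ+) :
    ∑ j ∈ range p, lambertTerm k (ζ ^ j * q) n =
      p * (lambertTerm k (q ^ (p : ℕ)) n +
        if (p : ℕ) ∣ n then lambertTerm k q n - lambertTerm k (q ^ (p : ℕ)) n else 0) := by
  have hpow (j : ℕ) : (ζ ^ j * q) ^ (n : ℕ) = (ζ ^ (n : ℕ)) ^ j * q ^ (n : ℕ) := by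
    rw [mul_pow, pow_right_comm]
  simp only [lambertTerm, ← mul_sum, hpow, pow_right_comm q (p : ℕ)]
  split_ifs with hdvd
  · simp only [(hζ.pow_eq_one_iff_dvd n).mpr hdvd, one_pow, one_mul, sum_const, card_range,
      nsmul_eq_mul, add_sub_cancel]
    ring
  · have hprim : IsPrimitiveRoot (ζ ^ (n : ℕ)) p :=
      hζ.pow_of_coprime n (Nat.coprime_comm.mp ((Nat.Prime.coprime_iff_not_dvd hp).mpr hdvd))
    have hqn : ‖(q ^ (n : ℕ)) ^ (p : ℕ)‖ < 1 := by
      rw [← pow_mul]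
      exact norm_pow_lt_one hq (by positivity)
    rw [hprim.sum_pow_mul_div_one_sub_pow_mul (fun h => by simp [h] at hqn)]
    ring

lemma ofReal_rpow_one_sub {x : ℝ} (hx : 0 < x) (k : ℝ) :
    ((x ^ (1 - k) : ℝ) : ℂ) = x * (x : ℂ) ^ (-(k : ℂ)) := by
  rw [sub_eq_add_neg, Real.rpow_add hx, Real.rpow_one, ofReal_mul, ofReal_cpow hx.le]
  push_cast
  rfl

theorem sum_lambertSeries_pow_mul (k : ℝ) (hp : p.Prime) (hζ : IsPrimitiveRoot ζ p)
    (hq : ‖q‖ < 1) :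
    ∑ j ∈ range p, lambertSeries k (ζ ^ j * q) =
      (p + (((p : ℝ) ^ (1 - k) : ℝ) : ℂ)) * lambertSeries k (q ^ (p : ℕ))
        - (((p : ℝ) ^ (1 - k) : ℝ) : ℂ) * lambertSeries k (q ^ ((p : ℕ) ^ 2)) := by
  have hqp : ‖q ^ (p : ℕ)‖ < 1 := norm_pow_lt_one hq p.ne_zero
  have hζq (j : ℕ) : ‖ζ ^ j * q‖ < 1 := by
    rwa [norm_mul, norm_pow, hζ.norm'_eq_one p.ne_zero, one_pow, one_mul]
  set D : ℕ+ → ℂ := fun n =>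
    if (p : ℕ) ∣ n then lambertTerm k q n - lambertTerm k (q ^ (p : ℕ)) n else 0
  have hD : Summable D :=
    (((summable_lambertTerm k hq).sub (summable_lambertTerm k hqp)).indicator
      {n | (p : ℕ) ∣ n}).congr fun n => by simp [D, Set.indicator_apply]
  have htsumD : ∑' n, D n = (p : ℂ) ^ (-(k : ℂ)) *
      (lambertSeries k (q ^ (p : ℕ)) - lambertSeries k (q ^ ((p : ℕ) ^ 2))) := by
    rw [tsum_ite_dvd]
    simp only [lambertTerm_mul, ← mul_sub, tsum_mul_left, ← pow_mul, ← sq]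
    rw [Summable.tsum_sub (summable_lambertTerm k hqp)
      (summable_lambertTerm k (norm_pow_lt_one hq (by positivity)))]
    rfl
  calc ∑ j ∈ range p, lambertSeries k (ζ ^ j * q)
      = ∑' n, ∑ j ∈ range p, lambertTerm k (ζ ^ j * q) n :=
        (Summable.tsum_finsetSum fun j _ => summable_lambertTerm k (hζq j)).symm
    _ = ∑' n, p * (lambertTerm k (q ^ (p : ℕ)) n + D n) :=
        tsum_congr (sum_lambertTerm_pow_mul k hp hζ hq)
    _ = p * (lambertSeries k (q ^ (p : ℕ)) + ∑' n, D n) := by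
        rw [tsum_mul_left, Summable.tsum_add (summable_lambertTerm k hqp) hD, lambertSeries]
    _ = _ := by
        rw [htsumD, ofReal_rpow_one_sub (Nat.cast_pos.mpr p.pos), ofReal_natCast]
        ring

end

lemma P_eq_lambertSeries (k : ℝ) (z : ℂ) : P k z = lambertSeries k (cexp (2 * π * I * z)) :=
  tsum_congr fun n => by
    rw [lambertTerm, ← exp_nat_mul,
      show ((n : ℕ) : ℂ) * (2 * π * I * z) = 2 * π * I * n * z by ring]

lemma P_add_intCast (k : ℝ) (z : ℂ) (m : ℤ) : P k (z + m) = P k z := by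
  rw [P_eq_lambertSeries, P_eq_lambertSeries, mul_add, exp_add, mul_comm _ (m : ℂ),
    exp_int_mul_two_pi_mul_I, mul_one]

theorem sum_range_P_add_div (k : ℝ) {p : ℕ+} (hp : p.Prime) {z : ℂ} (hz : 0 < z.im) :
    ∑ j ∈ range p, P k (z + j / p) =
      (p + (((p : ℝ) ^ (1 - k) : ℝ) : ℂ)) * P k (p * z)
        - (((p : ℝ) ^ (1 - k) : ℝ) : ℂ) * P k (p ^ 2 * z) := by
  have hshift (j : ℕ) :
      cexp (2 * π * I * (z + j / p)) = cexp (2 * π * I / p) ^ j * cexp (2 * π * I * z) := by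
    rw [← exp_nat_mul, ← exp_add]
    ring_nf
  have hmul (d : ℕ) : cexp (2 * π * I * (d * z)) = cexp (2 * π * I * z) ^ d := by
    rw [← exp_nat_mul]
    ring_nf
  simp only [P_eq_lambertSeries, hshift]
  rw [hmul, ← Nat.cast_pow, hmul]
  exact sum_lambertSeries_pow_mul k hp (isPrimitiveRoot_exp p p.ne_zero)
    (UpperHalfPlane.norm_exp_two_pi_I_lt_one ⟨z, hz⟩)

theorem septupling (k : ℝ) (z : ℂ) (hz : 0 < z.im) :
    ∑ r ∈ Finset.Icc (-3 : ℤ) 3, P k (z + (r : ℂ) / 7) =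
      (7 + (((7 : ℝ) ^ (1 - k) : ℝ) : ℂ)) * P k (7 * z)
        - (((7 : ℝ) ^ (1 - k) : ℝ) : ℂ) * P k (49 * z) := by
  have h7 : (7 : ℕ+).Prime := by norm_num [PNat.Prime]
  have h := sum_range_P_add_div k h7 (z := z - 3 / 7) (by simpa using hz)
  have hIcc : Finset.Icc (-3 : ℤ) 3 = (range 7).image fun j : ℕ => (j : ℤ) - 3 := by decide
  rw [hIcc, sum_image fun a _ b _ hab => by simpa using hab]
  calc _ = ∑ j ∈ range (7 : ℕ+), P k (z - 3 / 7 + j / (7 : ℕ+)) :=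
        sum_congr rfl fun j _ => congrArg (P k) (by push_cast; ring)
    _ = _ := by
      rw [h, show ((7 : ℕ+) : ℂ) * (z - 3 / 7) = 7 * z + (-3 : ℤ) by push_cast; ring,
        show ((7 : ℕ+) : ℂ) ^ 2 * (z - 3 / 7) = 49 * z + (-21 : ℤ) by push_cast; ring,
        P_add_intCast, P_add_intCast]
      norm_num
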